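/- arXiv:2106.15414 — 2 statements merged into one kernel-verified Lean document; each statement's English description precedes it below -/
import Mathlib

section
/- Two permutations σ, τ ∈ S_{2n} lie in the same double coset of B_n\S_{2n}/B_n if and only if they have the same coset-type. -/
/-- Cycle type including fixed points. For matchings `δ₁,δ₂` (fixed-point-free
involutions), `Λ(δ₁,δ₂) = λ` iff `fullCycleType (δ₁ * δ₂) = λ + λ`; in particular
the coset-type of `σ` is determined by `fullCycleType (ε * (σ·ε))`. -/
def fullCycleType {α : Type*} [Fintype α] [DecidableEq α] (f : Equiv.Perm α) : Multiset ℕ :=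
  f.cycleType + Multiset.replicate (Fintype.card α - f.cycleType.sum) 1

/-- The matching `ε = {{1,1̂},…,{n,n̂}}` on `A_n = Fin n ⊕ Fin n`. -/
def epsilonPerm (n : ℕ) : Equiv.Perm (Fin n ⊕ Fin n) := Equiv.sumComm (Fin n) (Fin n)

/-!
A pair of matchings `(e, d)` of a finite set is determined, up to simultaneous conjugation, by
the cycle type of `p = e * d`. Indeed `e` inverts `p` and, as both `e` and `d` are fixed-point
free, sends every cycle of `p` to a different cycle of the same length. Choosing one cycle out
of each such pair gives a `p`-invariant set `S` with `α = S ⊔ e S`, and in the coordinates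
`S ⊕ S` the pair `(e, p)` becomes `(swap, q ⊕ q⁻¹)` with `q = p|_S`. So the cycle type of `p` is
twice that of `q`, and equal cycle types of `e * d` and `e' * d'` make `q`, `q'` conjugate,
which yields a conjugacy of the pairs. For `e = e' = ε`, `d = σ ε σ⁻¹`, `d' = τ ε τ⁻¹` such a
conjugating `g` lies in `B_n`, and `τ ∈ g σ B_n`.
-/

open Function

theorem Multiset.add_self_injective {γ : Type*} :
    Injective fun m : Multiset γ => m + m := by
  classical
  intro m m' h
  refine Multiset.ext.mpr fun a => ?_
  have := congrArg (Multiset.count a) h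
  simp only [Multiset.count_add] at this
  omega

namespace Equiv.Perm

variable {α β : Type*} [Fintype α] [DecidableEq α] [Fintype β] [DecidableEq β]

theorem cycleType_permCongr (χ : α ≃ β) (f : Perm α) :
    (χ.permCongr f).cycleType = f.cycleType := by
  let F : α ≃ {_y : β // True} := χ.trans (subtypeUnivEquiv fun _ => trivial).symm
  have : χ.permCongr f = f.extendDomain F := by
    ext y
    obtain ⟨x, rfl⟩ := χ.surjective y
    rw [permCongr_apply, symm_apply_apply]
    exact (extendDomain_apply_image f F x).symm
  rw [this, cycleType_extendDomain]

theorem cycleType_eq_of_semiconj {χ : α ≃ β} {f : Perm α} {g : Perm β}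
    (h : Semiconj χ f g) : f.cycleType = g.cycleType := by
  have : χ.permCongr f = g := by
    ext y
    obtain ⟨x, rfl⟩ := χ.surjective y
    simp [h x]
  rw [← this, cycleType_permCongr]

theorem exists_equiv_semiconj_of_cycleType_eq {f : Perm α} {g : Perm β}
    (hcard : Fintype.card α = Fintype.card β) (h : f.cycleType = g.cycleType) :
    ∃ χ : α ≃ β, Semiconj χ f g := by
  let χ := Fintype.equivOfCardEq hcard
  obtain ⟨c, hc⟩ := isConj_iff.mp <|
    isConj_iff_cycleType_eq.mpr ((cycleType_permCongr χ f).trans h)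
  refine ⟨χ.trans c, fun x => ?_⟩
  simp [← hc]

theorem cycleType_sumCongr_one (a : Perm α) :
    (sumCongr a (1 : Perm β)).cycleType = a.cycleType := by
  let F := ofInjective (Sum.inl : α → α ⊕ β) Sum.inl_injective
  have : sumCongr a (1 : Perm β) = a.extendDomain F := by
    ext (x | y)
    · exact (extendDomain_apply_image a F x).symm
    · rw [extendDomain_apply_not_subtype _ _ (by simp)]
      rfl
  rw [this, cycleType_extendDomain]

theorem cycleType_sumCongr (a : Perm α) (b : Perm β) :
    (sumCongr a b).cycleType = a.cycleType + b.cycleType := by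
  have hdisj : Disjoint (sumCongr a 1) (sumCongr 1 b) := by
    rintro (x | y) <;> simp
  have hswap : (sumComm β α).permCongr (sumCongr b 1) = sumCongr 1 b := by
    ext (x | y) <;> simp
  have hsplit : sumCongr a b = sumCongr a 1 * sumCongr 1 b := by
    rw [sumCongr_mul, mul_one, one_mul]
  rw [hsplit, hdisj.cycleType_mul, ← hswap,
    cycleType_permCongr, cycleType_sumCongr_one, cycleType_sumCongr_one]

end Equiv.Perm

theorem Setoid.exists_saturated_half {α : Type*} (s : Setoid α) {ι : α → α} (hι : Involutive ι)
    (hs : ∀ x y, s x y → s (ι x) (ι y)) (hne : ∀ x, ¬ s x (ι x)) :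
    ∃ S : Set α, (∀ x y, s x y → (x ∈ S ↔ y ∈ S)) ∧ ∀ x, ι x ∈ S ↔ x ∉ S := by
  let r : Quotient s → Quotient s → Prop := WellOrderingRel
  refine ⟨{x | r ⟦x⟧ ⟦ι x⟧}, fun x y hxy => ?_, fun x => ?_⟩
  · simp only [Set.mem_ofPred_eq, Quotient.sound hxy, Quotient.sound (hs x y hxy)]
  · have hx : ⟦x⟧ ≠ ⟦ι x⟧ := fun h => hne x (Quotient.exact h)
    simp only [Set.mem_ofPred_eq, hι x]
    rcases trichotomous_of r ⟦x⟧ ⟦ι x⟧ with h | h | h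
    · exact iff_of_false (asymm h) (not_not.mpr h)
    · exact absurd h hx
    · exact iff_of_true h (asymm h)

/-- A matching (partition into pairs), encoded as the involution exchanging the two points of
each pair. -/
def Equiv.Perm.IsMatching {α : Type*} (e : Equiv.Perm α) : Prop :=
  Involutive e ∧ ∀ x, e x ≠ x

namespace Equiv.Perm.IsMatching

variable {α : Type*} {e d : Perm α}

theorem mul_self (he : e.IsMatching) : e * e = 1 :=
  ext he.1

theorem inv_eq (he : e.IsMatching) : e⁻¹ = e :=
  inv_eq_of_mul_eq_one_right he.mul_self

theorem conj (he : e.IsMatching) (g : Perm α) : (g * e * g⁻¹).IsMatching :=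
  ⟨fun x => by simp [he.1 _], fun x hx => he.2 (g⁻¹ x) ((eq_symm_apply g).mpr hx)⟩

theorem semiconjBy_mul (he : e.IsMatching) (hd : d.IsMatching) :
    SemiconjBy e (e * d) (e * d)⁻¹ := by
  rw [SemiconjBy, mul_inv_rev, hd.inv_eq, he.inv_eq, mul_assoc, ← mul_assoc e, he.mul_self,
    one_mul, mul_one]

theorem apply_zpow_apply (he : e.IsMatching) (hd : d.IsMatching) (k : ℤ) (x : α) :
    e (((e * d) ^ k) x) = ((e * d) ^ (-k)) (e x) := by
  have h := (he.semiconjBy_mul hd).zpow_right k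
  rw [inv_zpow, ← zpow_neg] at h
  exact congrFun (congrArg DFunLike.coe h) x

theorem sameCycle_apply (he : e.IsMatching) (hd : d.IsMatching) {x y : α}
    (h : (e * d).SameCycle x y) : (e * d).SameCycle (e x) (e y) := by
  obtain ⟨k, rfl⟩ := h
  exact ⟨-k, (he.apply_zpow_apply hd k x).symm⟩

theorem not_sameCycle_apply (he : e.IsMatching) (hd : d.IsMatching) (x : α) :
    ¬ (e * d).SameCycle x (e x) := by
  rintro ⟨k, hk⟩
  obtain ⟨j, rfl | rfl⟩ := k.even_or_odd'
  · apply he.2 (((e * d) ^ j) x)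
    rw [he.apply_zpow_apply hd, ← hk, ← mul_apply, ← zpow_add]
    congr 2
    ring
  · apply hd.2 (((e * d) ^ j) x)
    have h := he.apply_zpow_apply hd (j + 1) x
    have h1 : ((e * d) ^ (j + 1)) x = e (d (((e * d) ^ j) x)) := by
      rw [add_comm, zpow_one_add]
      rfl
    have h2 : ((e * d) ^ (-(j + 1))) (e x) = ((e * d) ^ j) x := by
      rw [← hk, ← mul_apply, ← zpow_add]
      congr 2
      ring
    rwa [h1, he.1, h2] at h

theorem exists_invariant_half (he : e.IsMatching) (hd : d.IsMatching) :
    ∃ S : Set α, (∀ x, (e * d) x ∈ S ↔ x ∈ S) ∧ ∀ x, e x ∈ S ↔ x ∉ S := by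
  obtain ⟨S, hsat, hS⟩ := (SameCycle.setoid (e * d)).exists_saturated_half he.1
    (fun _ _ => he.sameCycle_apply hd) (he.not_sameCycle_apply hd)
  exact ⟨S, fun x => (hsat _ _ (sameCycle_apply_right.mpr (SameCycle.refl _ x))).symm, hS⟩

theorem exists_sumCongr_model (he : e.IsMatching) (hd : d.IsMatching) :
    ∃ (S : Set α) (q : Perm S) (φ : S ⊕ S ≃ α),
      Semiconj φ Sum.swap e ∧ Semiconj φ (sumCongr q q⁻¹) (e * d) := by
  classical
  obtain ⟨S, hp, hS⟩ := he.exists_invariant_half hd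
  let φ : S ⊕ S ≃ α :=
    (Equiv.sumCongr (Equiv.refl S) (e.subtypeEquiv (p := (· ∈ S)) (q := (· ∈ Sᶜ))
      fun x => by rw [Set.mem_compl_iff, hS, not_not])).trans
      (Equiv.Set.sumCompl S)
  refine ⟨S, (e * d).subtypePerm hp, φ, ?_, ?_⟩
  · rintro (x | x) <;> simp [φ, he.1 _]
  · rintro (x | x)
    · simp [φ]
    · simp [φ, mul_inv_rev, he.inv_eq, hd.inv_eq]

theorem exists_conj_of_cycleType_eq [Fintype α] [DecidableEq α] {e' d' : Perm α}
    (he : e.IsMatching) (hd : d.IsMatching) (he' : e'.IsMatching) (hd' : d'.IsMatching)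
    (h : (e * d).cycleType = (e' * d').cycleType) :
    ∃ g : Perm α, g * e * g⁻¹ = e' ∧ g * d * g⁻¹ = d' := by
  classical
  obtain ⟨S, q, φ, hφe, hφp⟩ := he.exists_sumCongr_model hd
  obtain ⟨S', q', φ', hφe', hφp'⟩ := he'.exists_sumCongr_model hd'
  have hq : q.cycleType = q'.cycleType := by
    have h' := (cycleType_eq_of_semiconj hφp).trans (h.trans (cycleType_eq_of_semiconj hφp').symm)
    rw [cycleType_sumCongr, cycleType_sumCongr, cycleType_inv, cycleType_inv] at h'
    exact Multiset.add_self_injective h'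
  have hcard : Fintype.card S = Fintype.card S' := by
    have h' := (Fintype.card_congr φ).trans (Fintype.card_congr φ').symm
    rw [Fintype.card_sum, Fintype.card_sum] at h'
    omega
  obtain ⟨ψ, hψ⟩ := exists_equiv_semiconj_of_cycleType_eq hcard hq
  let g : Perm α := φ.symm.trans ((Equiv.sumCongr ψ ψ).trans φ')
  have hψψ : Semiconj (Equiv.sumCongr ψ ψ) (sumCongr q q⁻¹) (sumCongr q' q'⁻¹) := by
    rintro (x | x)
    · simp [hψ x]
    · simpa using hψ.inverses_right q.right_inv q'.left_inv x
  have hge : SemiconjBy g e e' := ext <| (hφe'.comp_left (fun x => by cases x <;> rfl)).comp_left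
    (hφe.inverse_left φ.left_inv φ.right_inv)
  have hgp : SemiconjBy g (e * d) (e' * d') := ext <| (hφp'.comp_left hψψ).comp_left
    (hφp.inverse_left φ.left_inv φ.right_inv)
  have hgd : SemiconjBy g d d' := by
    simpa only [← mul_assoc, he.mul_self, he'.mul_self, one_mul] using hge.mul_right hgp
  exact ⟨g, mul_inv_eq_of_eq_mul hge.eq, mul_inv_eq_of_eq_mul hgd.eq⟩

theorem exists_doubleCoset_iff [Fintype α] [DecidableEq α] (he : e.IsMatching)
    (σ τ : Perm α) :
    (∃ b₁ b₂ : Perm α, b₁ * e * b₁⁻¹ = e ∧ b₂ * e * b₂⁻¹ = e ∧ τ = b₁ * σ * b₂) ↔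
      (e * (σ * e * σ⁻¹)).cycleType = (e * (τ * e * τ⁻¹)).cycleType := by
  constructor
  · rintro ⟨b₁, b₂, hb₁, hb₂, rfl⟩
    have hconj : e * (b₁ * σ * b₂ * e * (b₁ * σ * b₂)⁻¹) = b₁ * (e * (σ * e * σ⁻¹)) * b₁⁻¹ := by
      calc e * (b₁ * σ * b₂ * e * (b₁ * σ * b₂)⁻¹)
          = e * (b₁ * σ * (b₂ * e * b₂⁻¹) * σ⁻¹ * b₁⁻¹) := by group
        _ = b₁ * e * b₁⁻¹ * (b₁ * σ * e * σ⁻¹ * b₁⁻¹) := by rw [hb₂, hb₁]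
        _ = b₁ * (e * (σ * e * σ⁻¹)) * b₁⁻¹ := by group
    rw [hconj, cycleType_conj]
  · intro h
    obtain ⟨g, hg, hgσ⟩ := he.exists_conj_of_cycleType_eq (he.conj σ) he (he.conj τ) h
    refine ⟨g, σ⁻¹ * g⁻¹ * τ, hg, ?_, by group⟩
    calc σ⁻¹ * g⁻¹ * τ * e * (σ⁻¹ * g⁻¹ * τ)⁻¹ = σ⁻¹ * g⁻¹ * (τ * e * τ⁻¹) * g * σ := by group
      _ = e := by rw [← hgσ]; group

end Equiv.Perm.IsMatching

theorem fullCycleType_eq_iff {α : Type*} [Fintype α] [DecidableEq α] {f g : Equiv.Perm α} :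
    fullCycleType f = fullCycleType g ↔ f.cycleType = g.cycleType := by
  have hfilter (f : Equiv.Perm α) : (fullCycleType f).filter (2 ≤ ·) = f.cycleType := by
    rw [fullCycleType, Multiset.filter_add,
      Multiset.filter_eq_self.mpr fun k hk => Equiv.Perm.two_le_of_mem_cycleType hk,
      Multiset.filter_eq_nil.mpr fun k hk => by rw [Multiset.eq_of_mem_replicate hk]; omega,
      add_zero]
  refine ⟨fun h => ?_, fun h => by rw [fullCycleType, fullCycleType, h]⟩
  rw [← hfilter f, ← hfilter g, h]

theorem isMatching_epsilonPerm (n : ℕ) : (epsilonPerm n).IsMatching :=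
  ⟨Sum.swap_swap, fun x => by cases x <;> simp [epsilonPerm]⟩

/-- Two permutations `σ, τ ∈ S_{2n}` lie in the same double coset
`B_n\S_{2n}/B_n` (where `B_n` is the stabilizer of `ε`) iff they have the same
coset-type. -/
theorem double_coset_iff_coset_type (n : ℕ) (σ τ : Equiv.Perm (Fin n ⊕ Fin n)) :
    (∃ b₁ b₂ : Equiv.Perm (Fin n ⊕ Fin n),
        b₁ * epsilonPerm n * b₁⁻¹ = epsilonPerm n ∧
        b₂ * epsilonPerm n * b₂⁻¹ = epsilonPerm n ∧
        τ = b₁ * σ * b₂)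
      ↔ fullCycleType (epsilonPerm n * (σ * epsilonPerm n * σ⁻¹))
          = fullCycleType (epsilonPerm n * (τ * epsilonPerm n * τ⁻¹)) := by
  rw [fullCycleType_eq_iff]
  exact (isMatching_epsilonPerm n).exists_doubleCoset_iff σ τ
end

section
/- For a rectangular partition λ = (q × r), i.e. q parts all equal to r, one has (−1)^{|λ|} · J_λ^{(α)}(q̲) · J_λ^{(α)}(−αr̲) / j_λ^{(α)} = 1, where J_λ^{(α)}(u̲) denotes the evaluation of J_λ^{(α)} with every power-sum p_i set to u, and j_λ^{(α)} = ⟨J_λ, J_λ⟩_α. -/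
/-!
Reflecting the row index `i ↦ q − 1 − i` turns the factor `q + α j − i` of `J_λ(q̲)` into
`α j + i + 1`, and reflecting the column index `j ↦ r − 1 − j` turns the factor `−α r + α j − i`
of `J_λ(−αr̲)` into `−(α (j + 1) + i)`. Since the box `(i, j)` of the `q × r` rectangle has arm
`r − 1 − j` and leg `q − 1 − i`, reflecting both indices in the hook products gives the same two
products `∏ (α j + i + 1)` and `∏ (α (j + 1) + i)`, and the two signs `(−1)^{qr}` cancel.
-/

open Finset

lemma Nat.cast_sub_one_sub_of_lt {R : Type*} [AddGroupWithOne R] {n i : ℕ} (h : i < n) :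
    ((n - 1 - i : ℕ) : R) = n - 1 - i := by
  rw [Nat.cast_sub (by omega : i ≤ n - 1), Nat.cast_sub (by omega : 1 ≤ n), Nat.cast_one]

namespace Finset

variable {M : Type*} [CommMonoid M]

lemma prod_range_prod_range_reflect_snd (f : ℕ → ℕ → M) (q r : ℕ) :
    ∏ i ∈ range q, ∏ j ∈ range r, f i (r - 1 - j) = ∏ i ∈ range q, ∏ j ∈ range r, f i j :=
  prod_congr rfl fun i _ ↦ prod_range_reflect (f i) r

lemma prod_range_prod_range_reflect (f : ℕ → ℕ → M) (q r : ℕ) :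
    ∏ i ∈ range q, ∏ j ∈ range r, f (q - 1 - i) (r - 1 - j) =
      ∏ i ∈ range q, ∏ j ∈ range r, f i j := by
  rw [prod_range_prod_range_reflect_snd (fun i j ↦ f (q - 1 - i) j),
    prod_range_reflect (fun i ↦ ∏ j ∈ range r, f i j)]

lemma prod_range_prod_range_neg [HasDistribNeg M] (f : ℕ → ℕ → M) (q r : ℕ) :
    ∏ i ∈ range q, ∏ j ∈ range r, -f i j = (-1) ^ (q * r) * ∏ i ∈ range q, ∏ j ∈ range r, f i j := by
  simp only [prod_neg, card_range, prod_mul_distrib, prod_const, ← pow_mul, mul_comm r q]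

end Finset

theorem jack_rectangular_evaluation_general {K : Type*} [Field K]
    (α : K) (q r : ℕ) :
    (-1 : K) ^ (q * r)
        * (∏ i ∈ Finset.range q, ∏ j ∈ Finset.range r,
            ((q : K) + (α * (j : K) - (i : K))))
        * (∏ i ∈ Finset.range q, ∏ j ∈ Finset.range r,
            (-(α * (r : K)) + (α * (j : K) - (i : K))))
      = (∏ i ∈ Finset.range q, ∏ j ∈ Finset.range r,
            (α * ((r - 1 - j : ℕ) : K) + ((q - 1 - i : ℕ) : K) + 1))
        * (∏ i ∈ Finset.range q, ∏ j ∈ Finset.range r,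
            (α * (((r - 1 - j : ℕ) : K) + 1) + ((q - 1 - i : ℕ) : K))) := by
  have eval_q : ∏ i ∈ range q, ∏ j ∈ range r, ((q : K) + (α * j - i)) =
      ∏ i ∈ range q, ∏ j ∈ range r, (α * j + i + 1) := by
    rw [← prod_range_reflect (fun i ↦ ∏ j ∈ range r, (α * (j : K) + i + 1))]
    refine prod_congr rfl fun i hi ↦ prod_congr rfl fun j _ ↦ ?_
    rw [Nat.cast_sub_one_sub_of_lt (mem_range.mp hi)]
    ring
  have eval_neg_α_r : ∏ i ∈ range q, ∏ j ∈ range r, (-(α * r) + (α * j - i)) =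
      (-1) ^ (q * r) * ∏ i ∈ range q, ∏ j ∈ range r, (α * ((j : K) + 1) + i) := by
    rw [← prod_range_prod_range_neg, ← prod_range_prod_range_reflect_snd]
    refine prod_congr rfl fun i _ ↦ prod_congr rfl fun j hj ↦ ?_
    rw [Nat.cast_sub_one_sub_of_lt (mem_range.mp hj)]
    ring
  rw [eval_q, eval_neg_α_r,
    prod_range_prod_range_reflect (fun i j ↦ α * (j : K) + i + 1),
    prod_range_prod_range_reflect (fun i j ↦ α * ((j : K) + 1) + i),
    mul_mul_mul_comm, ← mul_pow, neg_one_mul, neg_neg, one_pow, one_mul]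

/-- For the rectangular partition `λ = (q × r)` (with `q` parts equal to `r`)
one has `(−1)^{|λ|} J_λ^{(α)}(q̲) · J_λ^{(α)}(−αr̲) / j_λ^{(α)} = 1`, where
`J_λ^{(α)}(u̲) = ∏_{□∈λ} (u + c_α(□))` with `c_α((i,j)) = α(j−1)−(i−1)` and
`j_λ^{(α)} = ∏_{□∈λ} (α a(□)+ℓ(□)+1) · ∏_{□∈λ} (α(a(□)+1)+ℓ(□))`; for the
rectangle the box in (0-indexed) row `i`, column `j` has arm `r−1−j` and leg
`q−1−i`.  Stated in cross-multiplied form. -/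
theorem jack_rectangular_evaluation {K : Type*} [Field K] [CharZero K]
    (α : K) (q r : ℕ) (hq : 0 < q) (hr : 0 < r) :
    (-1 : K) ^ (q * r)
        * (∏ i ∈ Finset.range q, ∏ j ∈ Finset.range r,
            ((q : K) + (α * (j : K) - (i : K))))
        * (∏ i ∈ Finset.range q, ∏ j ∈ Finset.range r,
            (-(α * (r : K)) + (α * (j : K) - (i : K))))
      = (∏ i ∈ Finset.range q, ∏ j ∈ Finset.range r,
            (α * ((r - 1 - j : ℕ) : K) + ((q - 1 - i : ℕ) : K) + 1))
        * (∏ i ∈ Finset.range q, ∏ j ∈ Finset.range r,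
            (α * (((r - 1 - j : ℕ) : K) + 1) + ((q - 1 - i : ℕ) : K))) :=
  jack_rectangular_evaluation_general α q r
end
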